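/- Let m, n be positive integers and h a norm on ℝ^m with generated norm H on ℝ^{m×n}. Then for every M ∈ ℝ^{m×n}, H(M) = inf { h(θ_1) + … + h(θ_k) : k ∈ ℕ, θ_1, …, θ_k ∈ ℝ^m, e_1, …, e_k ∈ ℝ^n unit vectors, M = θ_1 ⊗ e_1 + … + θ_k ⊗ e_k }. -/

import Mathlib

open MeasureTheory

noncomputable section

/-- `ℝ^n` with the Euclidean norm. -/
abbrev Euc (n : ℕ) := EuclideanSpace ℝ (Fin n)

/-- `h` is a norm on `ℝ^m`. -/
def IsNorm {m : ℕ} (h : (Fin m → ℝ) → ℝ) : Prop :=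
  (∀ x y, h (x + y) ≤ h x + h y) ∧ (∀ (c : ℝ) (x), h (c • x) = |c| * h x) ∧
    ∀ x, h x = 0 → x = 0

/-- The dual norm `h_*` of `h`: `h_*(g) = sup { g·θ : h θ ≤ 1 }`. -/
def dualNorm {m : ℕ} (h : (Fin m → ℝ) → ℝ) (g : Fin m → ℝ) : ℝ :=
  sSup {r | ∃ θ : Fin m → ℝ, h θ ≤ 1 ∧ r = ∑ i, g i * θ i}

/-- Matrix-vector product `M u`. -/
def matVec {m n : ℕ} (M : Fin m → Fin n → ℝ) (u : Euc n) : Fin m → ℝ :=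
  fun i => ∑ j, M i j * u j

/-- Frobenius inner product `M : N`. -/
def frob {m n : ℕ} (M N : Fin m → Fin n → ℝ) : ℝ := ∑ i, ∑ j, M i j * N i j

/-- `M ∈ ∂H(0)`, i.e. `h_*(M u) ≤ 1` for all `|u| ≤ 1`. -/
def inSubdiffH {m n : ℕ} (h : (Fin m → ℝ) → ℝ) (M : Fin m → Fin n → ℝ) : Prop :=
  ∀ u : Euc n, ‖u‖ ≤ 1 → dualNorm h (matVec M u) ≤ 1

/-- The norm `H` on `ℝ^{m×n}` generated by `h`:
`H(N) = sup { M:N : M ∈ ∂H(0) }`. -/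
def genNorm {m n : ℕ} (h : (Fin m → ℝ) → ℝ) (N : Fin m → Fin n → ℝ) : ℝ :=
  sSup {r | ∃ M : Fin m → Fin n → ℝ, inSubdiffH h M ∧ r = frob M N}

/-- The rank-one matrix `θ ⊗ e`. -/
def outer {m n : ℕ} (θ : Fin m → ℝ) (e : Euc n) : Fin m → Fin n → ℝ :=
  fun i j => θ i * e j

/-!
Every `M' ∈ ∂H(0)` pairs with `θ ⊗ e`, `|e| = 1`, to at most `h_*(M' e) h(θ) ≤ h(θ)`, so `H(M)`
is at most the cost `∑ h(θ_a)` of every rank-one decomposition of `M`. Conversely, let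
`0 < c < D`, where `D` is the infimum of these costs. The matrices having a decomposition of
cost `< D` form an open convex set (decompositions add and scale, and a small perturbation
costs little by its column decomposition) which contains `c (θ ⊗ e)` whenever `h(θ) ≤ 1`,
`|e| ≤ 1`, but not `M`. A functional separating this set from `M`, normalised to take the
value `c` at `M`, is an element of `∂H(0)`, whence `H(M) ≥ c`.
-/

namespace IsNorm

variable {m : ℕ} {h : (Fin m → ℝ) → ℝ}

def toSeminorm (hh : IsNorm h) : Seminorm ℝ (Fin m → ℝ) :=
  Seminorm.of h hh.1 fun c x => by rw [hh.2.1, Real.norm_eq_abs]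

@[simp]
lemma toSeminorm_apply (hh : IsNorm h) (x : Fin m → ℝ) : hh.toSeminorm x = h x := rfl

lemma map_zero (hh : IsNorm h) : h 0 = 0 := by
  simpa using _root_.map_zero hh.toSeminorm

lemma nonneg (hh : IsNorm h) (x : Fin m → ℝ) : 0 ≤ h x := by
  simpa using apply_nonneg hh.toSeminorm x

lemma map_nonneg_smul (hh : IsNorm h) {c : ℝ} (hc : 0 ≤ c) (x : Fin m → ℝ) :
    h (c • x) = c * h x := by
  rw [hh.2.1, abs_of_nonneg hc]

lemma continuous (hh : IsNorm h) : Continuous h :=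
  continuousOn_univ.mp (hh.toSeminorm.convexOn.continuousOn isOpen_univ)

lemma exists_pos_mul_norm_le (hh : IsNorm h) : ∃ c > 0, ∀ θ : Fin m → ℝ, c * ‖θ‖ ≤ h θ := by
  rcases isEmpty_or_nonempty (Fin m) with hm | hm
  · exact ⟨1, one_pos, fun θ => by simp [Subsingleton.elim θ 0, hh.map_zero]⟩
  obtain ⟨θ₀, hθ₀, hmin⟩ := (isCompact_sphere (0 : Fin m → ℝ) 1).exists_isMinOn
    (NormedSpace.sphere_nonempty.2 zero_le_one) hh.continuous.continuousOn
  have hθ₀_ne : θ₀ ≠ 0 := ne_zero_of_mem_unit_sphere ⟨θ₀, hθ₀⟩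
  refine ⟨h θ₀, (hh.nonneg θ₀).lt_of_ne fun h0 => hθ₀_ne (hh.2.2 θ₀ h0.symm), fun θ => ?_⟩
  rcases eq_or_ne θ 0 with rfl | hθ
  · simp [hh.map_zero]
  have hnorm : 0 < ‖θ‖ := norm_pos_iff.2 hθ
  have hsphere : ‖θ‖⁻¹ • θ ∈ Metric.sphere (0 : Fin m → ℝ) 1 := by
    simp [norm_smul, hnorm.ne']
  have hle : h θ₀ ≤ h (‖θ‖⁻¹ • θ) := hmin hsphere
  rwa [hh.map_nonneg_smul (inv_nonneg.2 hnorm.le), le_inv_mul_iff₀ hnorm, mul_comm] at hle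

end IsNorm

section DualNorm

variable {m : ℕ} {h : (Fin m → ℝ) → ℝ}

-- Definiteness of `h` enters here: it keeps `dualNorm` from being `sSup` of an unbounded set.
lemma bddAbove_dualNorm_set (hh : IsNorm h) (g : Fin m → ℝ) :
    BddAbove {r | ∃ θ : Fin m → ℝ, h θ ≤ 1 ∧ r = ∑ i, g i * θ i} := by
  obtain ⟨c, hc, hle⟩ := hh.exists_pos_mul_norm_le
  refine ⟨∑ i, |g i| * c⁻¹, ?_⟩
  rintro _ ⟨θ, hθ, rfl⟩
  have hθc : ‖θ‖ ≤ c⁻¹ := by simpa using (le_inv_mul_iff₀ hc).2 ((hle θ).trans hθ)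
  refine Finset.sum_le_sum fun i _ => ?_
  calc g i * θ i ≤ |g i| * |θ i| := by rw [← abs_mul]; exact le_abs_self _
    _ ≤ |g i| * c⁻¹ := by gcongr; exact (norm_le_pi_norm θ i).trans hθc

lemma dualNorm_le (hh : IsNorm h) {g : Fin m → ℝ} {a : ℝ}
    (hg : ∀ θ, h θ ≤ 1 → ∑ i, g i * θ i ≤ a) : dualNorm h g ≤ a :=
  csSup_le ⟨0, 0, by simp [hh.map_zero]⟩ fun _ ⟨θ, hθ, hr⟩ => hr ▸ hg θ hθ

lemma sum_mul_le_dualNorm_mul (hh : IsNorm h) (g θ : Fin m → ℝ) :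
    ∑ i, g i * θ i ≤ dualNorm h g * h θ := by
  rcases (hh.nonneg θ).eq_or_lt with h0 | hpos
  · simp [hh.2.2 θ h0.symm, hh.map_zero]
  have hunit : h ((h θ)⁻¹ • θ) ≤ 1 := by
    rw [hh.map_nonneg_smul (inv_nonneg.2 hpos.le), inv_mul_cancel₀ hpos.ne']
  have hle : ∑ i, g i * ((h θ)⁻¹ • θ) i ≤ dualNorm h g :=
    le_csSup (bddAbove_dualNorm_set hh g) ⟨_, hunit, rfl⟩
  simp only [Pi.smul_apply, smul_eq_mul, mul_left_comm _ (h θ)⁻¹, ← Finset.mul_sum] at hle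
  rwa [inv_mul_le_iff₀ hpos, mul_comm] at hle

end DualNorm

section Frobenius

variable {m n : ℕ}

lemma outer_smul_left (c : ℝ) (θ : Fin m → ℝ) (e : Euc n) :
    outer (c • θ) e = c • outer θ e := by
  ext i j
  simp [outer, mul_assoc]

lemma outer_smul_right (c : ℝ) (θ : Fin m → ℝ) (e : Euc n) :
    outer θ (c • e) = c • outer θ e := by
  ext i j
  simp [outer, mul_left_comm]

lemma frob_outer (F : Fin m → Fin n → ℝ) (θ : Fin m → ℝ) (e : Euc n) :
    frob F (outer θ e) = ∑ i, matVec F e i * θ i := by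
  simp only [frob, outer, matVec, Finset.sum_mul]
  exact Finset.sum_congr rfl fun i _ => Finset.sum_congr rfl fun j _ => by ring

lemma frob_sum_right {ι : Type*} (F : Fin m → Fin n → ℝ) (s : Finset ι)
    (X : ι → Fin m → Fin n → ℝ) : frob F (∑ a ∈ s, X a) = ∑ a ∈ s, frob F (X a) := by
  simp only [frob, Finset.sum_apply, Finset.mul_sum]
  simp_rw [Finset.sum_comm (t := s)]

lemma frob_zero_left (X : Fin m → Fin n → ℝ) : frob 0 X = 0 := by
  simp [frob]

lemma exists_frob_eq (f : (Fin m → Fin n → ℝ) →ₗ[ℝ] ℝ) :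
    ∃ F : Fin m → Fin n → ℝ, ∀ X, f X = frob F X := by
  refine ⟨fun i j => f (Pi.single i (Pi.single j 1)), fun X => ?_⟩
  have hX : X = ∑ i, ∑ j, X i j • Pi.single i (Pi.single j (1 : ℝ)) := by
    ext i j
    simp [Finset.sum_apply, Pi.single_apply, ite_apply]
  conv_lhs => rw [hX]
  simp [frob, mul_comm]

end Frobenius

section Decomposition

variable {m n : ℕ} {h : (Fin m → ℝ) → ℝ}

def decompCosts (h : (Fin m → ℝ) → ℝ) (M : Fin m → Fin n → ℝ) : Set ℝ :=
  {r | ∃ (k : ℕ) (θ : Fin k → Fin m → ℝ) (e : Fin k → Euc n),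
    (∀ a, ‖e a‖ = 1) ∧ M = ∑ a, outer (θ a) (e a) ∧ r = ∑ a, h (θ a)}

lemma zero_mem_decompCosts_zero : (0 : ℝ) ∈ decompCosts h (0 : Fin m → Fin n → ℝ) :=
  ⟨0, finZeroElim, finZeroElim, finZeroElim, by simp, by simp⟩

lemma add_mem_decompCosts {M₁ M₂ : Fin m → Fin n → ℝ} {r₁ r₂ : ℝ}
    (h₁ : r₁ ∈ decompCosts h M₁) (h₂ : r₂ ∈ decompCosts h M₂) :
    r₁ + r₂ ∈ decompCosts h (M₁ + M₂) := by
  obtain ⟨k₁, θ₁, e₁, he₁, rfl, rfl⟩ := h₁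
  obtain ⟨k₂, θ₂, e₂, he₂, rfl, rfl⟩ := h₂
  refine ⟨k₁ + k₂, Fin.append θ₁ θ₂, Fin.append e₁ e₂,
    Fin.addCases (by simpa using he₁) (by simpa using he₂), ?_, ?_⟩ <;>
  simp [Fin.sum_univ_add]

lemma smul_mem_decompCosts (hh : IsNorm h) {M : Fin m → Fin n → ℝ} {r t : ℝ} (ht : 0 ≤ t)
    (hr : r ∈ decompCosts h M) : t * r ∈ decompCosts h (t • M) := by
  obtain ⟨k, θ, e, he, rfl, rfl⟩ := hr
  refine ⟨k, fun a => t • θ a, e, he, ?_, ?_⟩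
  · simp [Finset.smul_sum, outer_smul_left]
  · simp [Finset.mul_sum, hh.map_nonneg_smul ht]

lemma nonneg_of_mem_decompCosts (hh : IsNorm h) {M : Fin m → Fin n → ℝ} {r : ℝ}
    (hr : r ∈ decompCosts h M) : 0 ≤ r := by
  obtain ⟨k, θ, e, -, -, rfl⟩ := hr
  exact Finset.sum_nonneg fun a _ => hh.nonneg (θ a)

lemma sum_col_mem_decompCosts (M : Fin m → Fin n → ℝ) :
    ∑ j, h (fun i => M i j) ∈ decompCosts h M := by
  refine ⟨n, fun j i => M i j, fun j => EuclideanSpace.single j 1, fun j => by simp, ?_, rfl⟩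
  ext i j
  simp [outer, Finset.sum_apply]

lemma exists_mem_decompCosts_outer_le (hh : IsNorm h) (θ : Fin m → ℝ) {e : Euc n}
    (he : ‖e‖ ≤ 1) : ∃ r ∈ decompCosts h (outer θ e), r ≤ h θ := by
  rcases eq_or_ne e 0 with rfl | he0
  · have h0 : outer θ (0 : Euc n) = 0 := by
      funext i j
      simp [outer]
    exact ⟨0, h0 ▸ zero_mem_decompCosts_zero, hh.nonneg θ⟩
  have hpos : 0 < ‖e‖ := norm_pos_iff.2 he0
  refine ⟨h (‖e‖ • θ), ⟨1, fun _ => ‖e‖ • θ, fun _ => ‖e‖⁻¹ • e, fun _ => ?_, ?_, by simp⟩, ?_⟩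
  · simp [norm_smul, hpos.ne']
  · simp [outer_smul_left, outer_smul_right, smul_smul, hpos.ne']
  · rw [hh.map_nonneg_smul hpos.le]
    exact mul_le_of_le_one_left (hh.nonneg θ) he

def decompSublevel (h : (Fin m → ℝ) → ℝ) (D : ℝ) : Set (Fin m → Fin n → ℝ) :=
  {X | ∃ r ∈ decompCosts h X, r < D}

lemma convex_decompSublevel (hh : IsNorm h) (D : ℝ) :
    Convex ℝ (decompSublevel (n := n) h D) := by
  rintro X ⟨r₁, hr₁, hr₁D⟩ Y ⟨r₂, hr₂, hr₂D⟩ a b ha hb hab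
  exact ⟨a * r₁ + b * r₂,
    add_mem_decompCosts (smul_mem_decompCosts hh ha hr₁) (smul_mem_decompCosts hh hb hr₂),
    convex_Iio D hr₁D hr₂D ha hb hab⟩

lemma isOpen_decompSublevel (hh : IsNorm h) (D : ℝ) :
    IsOpen (decompSublevel (n := n) h D) := by
  refine isOpen_iff_mem_nhds.2 fun X ⟨r, hr, hrD⟩ => ?_
  have hcont : Continuous fun Y : Fin m → Fin n → ℝ => r + ∑ j, h (fun i => (Y - X) i j) := by
    have := hh.continuous
    fun_prop
  have hnhds : {Y | r + ∑ j, h (fun i => (Y - X) i j) < D} ∈ nhds X :=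
    (isOpen_lt hcont continuous_const).mem_nhds (by simpa [← Pi.zero_def, hh.map_zero] using hrD)
  refine Filter.mem_of_superset hnhds fun Y hY => ⟨_, ?_, hY⟩
  simpa using add_mem_decompCosts hr (sum_col_mem_decompCosts (h := h) (Y - X))

end Decomposition

section GeneratedNorm

variable {m n : ℕ} {h : (Fin m → ℝ) → ℝ}

lemma inSubdiffH_of_frob_outer_le (hh : IsNorm h) {F : Fin m → Fin n → ℝ}
    (hF : ∀ θ (e : Euc n), h θ ≤ 1 → ‖e‖ ≤ 1 → frob F (outer θ e) ≤ 1) : inSubdiffH h F :=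
  fun u hu => dualNorm_le hh fun θ hθ => frob_outer F θ u ▸ hF θ u hθ hu

lemma inSubdiffH_zero (hh : IsNorm h) : inSubdiffH (n := n) h 0 :=
  inSubdiffH_of_frob_outer_le hh fun _ _ _ _ => by simp [frob_zero_left]

lemma frob_le_of_inSubdiffH (hh : IsNorm h) {F M : Fin m → Fin n → ℝ} {r : ℝ}
    (hF : inSubdiffH h F) (hr : r ∈ decompCosts h M) : frob F M ≤ r := by
  obtain ⟨k, θ, e, he, rfl, rfl⟩ := hr
  rw [frob_sum_right]
  refine Finset.sum_le_sum fun a _ => ?_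
  rw [frob_outer]
  exact (sum_mul_le_dualNorm_mul hh _ _).trans
    (mul_le_of_le_one_left (hh.nonneg _) (hF _ (he a).le))

lemma genNorm_le_of_mem_decompCosts (hh : IsNorm h) {M : Fin m → Fin n → ℝ} {r : ℝ}
    (hr : r ∈ decompCosts h M) : genNorm h M ≤ r :=
  csSup_le ⟨0, 0, inSubdiffH_zero hh, (frob_zero_left M).symm⟩
    fun _ ⟨_, hF, hs⟩ => hs ▸ frob_le_of_inSubdiffH hh hF hr

lemma frob_le_genNorm (hh : IsNorm h) {F : Fin m → Fin n → ℝ} (hF : inSubdiffH h F)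
    (M : Fin m → Fin n → ℝ) : frob F M ≤ genNorm h M :=
  le_csSup ⟨_, fun _ ⟨_, hF', hs⟩ => hs ▸ frob_le_of_inSubdiffH hh hF' (sum_col_mem_decompCosts M)⟩
    ⟨F, hF, rfl⟩

lemma genNorm_nonneg (hh : IsNorm h) (M : Fin m → Fin n → ℝ) : 0 ≤ genNorm h M := by
  simpa [frob_zero_left] using frob_le_genNorm hh (inSubdiffH_zero hh) M

lemma exists_inSubdiffH_frob_eq (hh : IsNorm h) {M : Fin m → Fin n → ℝ} {c : ℝ} (hc : 0 < c)
    (hcM : c < sInf (decompCosts h M)) : ∃ F, inSubdiffH h F ∧ frob F M = c := by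
  set D := sInf (decompCosts h M)
  have hM : M ∉ decompSublevel h D := fun ⟨r, hr, hrD⟩ =>
    (csInf_le ⟨0, fun _ => nonneg_of_mem_decompCosts hh⟩ hr).not_gt hrD
  obtain ⟨f, hf⟩ :=
    geometric_hahn_banach_open_point (convex_decompSublevel hh D) (isOpen_decompSublevel hh D) hM
  have hfM : 0 < f M := by simpa using hf 0 ⟨0, zero_mem_decompCosts_zero, hc.trans hcM⟩
  obtain ⟨F, hF⟩ := exists_frob_eq ((c / f M) • (f : (Fin m → Fin n → ℝ) →ₗ[ℝ] ℝ))
  refine ⟨F, inSubdiffH_of_frob_outer_le hh fun θ e hθ he => ?_, ?_⟩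
  · obtain ⟨r, hr, hrθ⟩ := exists_mem_decompCosts_outer_le hh (c • θ) he
    have hrD : r < D := by
      refine (hrθ.trans ?_).trans_lt hcM
      rw [hh.map_nonneg_smul hc.le]
      exact mul_le_of_le_one_right hc.le hθ
    have hlt := hf _ ⟨r, hr, hrD⟩
    rw [outer_smul_left, map_smul, smul_eq_mul] at hlt
    rw [← hF, LinearMap.smul_apply, smul_eq_mul, div_mul_eq_mul_div, div_le_one hfM]
    exact hlt.le
  · rw [← hF, LinearMap.smul_apply, ContinuousLinearMap.coe_coe, smul_eq_mul]
    field_simp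

end GeneratedNorm

theorem statement2_general {m n : ℕ}
    (h : (Fin m → ℝ) → ℝ) (hh : IsNorm h) :
    ∀ M : Fin m → Fin n → ℝ,
      genNorm h M = sInf {r | ∃ (k : ℕ) (θ : Fin k → Fin m → ℝ) (e : Fin k → Euc n),
        (∀ a, ‖e a‖ = 1) ∧ M = ∑ a, outer (θ a) (e a) ∧ r = ∑ a, h (θ a)} := by
  intro M
  change genNorm h M = sInf (decompCosts h M)
  refine le_antisymm
    (le_csInf ⟨_, sum_col_mem_decompCosts M⟩ fun _ => genNorm_le_of_mem_decompCosts hh) ?_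
  by_contra! hlt
  obtain ⟨c, hMc, hcM⟩ := exists_between hlt
  obtain ⟨F, hF, hFM⟩ := exists_inSubdiffH_frob_eq hh ((genNorm_nonneg hh M).trans_lt hMc) hcM
  exact (frob_le_genNorm hh hF M).not_gt (hFM ▸ hMc)

/-- `H(M)` is the infimum of `Σ h(θ_a)` over finite rank-one
decompositions `M = Σ θ_a ⊗ e_a` with unit vectors `e_a`. -/
theorem statement2 {m n : ℕ} (hm : 0 < m) (hn : 0 < n)
    (h : (Fin m → ℝ) → ℝ) (hh : IsNorm h) :
    ∀ M : Fin m → Fin n → ℝ,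
      genNorm h M = sInf {r | ∃ (k : ℕ) (θ : Fin k → Fin m → ℝ) (e : Fin k → Euc n),
        (∀ a, ‖e a‖ = 1) ∧ M = ∑ a, outer (θ a) (e a) ∧ r = ∑ a, h (θ a)} :=
  statement2_general h hh
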